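/- arXiv:2207.07615 — 10 statements merged into one kernel-verified Lean document; each statement's English description precedes it below -/
import Mathlib

section
/- Let m ≥ n, let A ∈ ℝ^{m×n} have full column rank n, let W ∈ ℝ^{n×n} be symmetric positive definite, let w ∈ ℝ^n and set b = A w. Given x₀ ∈ ℝ^n, suppose for k = 1,…,n there are sketching matrices S_k ∈ ℝ^{m×k} such that each k×k matrix S_kᵀ A W Aᵀ S_k is invertible, and the iterates are defined by x_k = x_{k−1} + W Aᵀ S_k (S_kᵀ A W Aᵀ S_k)⁻¹ S_kᵀ (b − A x_{k−1}). If S_n ∈ ℝ^{m×n} has full column rank n and every column of S_n lies in the column space of A, then x_n = w; in particular A x_n = b. -/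
/-! The last step makes the residual `b - A xₙ = A (w - xₙ)` orthogonal to the columns of
`Sₙ`. These are `n` independent vectors in the `n`-dimensional range of `A`, so `Sₙ = A U`
with `U` invertible: the residual lies in the range of `A` and is orthogonal to all of it,
hence vanishes, and `xₙ = w` because `A` is injective. -/

open Matrix

namespace Matrix

variable {m n k K : Type*}

noncomputable def projectionStep [Fintype m] [Fintype n] [Fintype k] [CommRing K] [DecidableEq k]
    (A : Matrix m n K) (W : Matrix n n K) (S : Matrix m k K) (b : m → K) (x : n → K) :
    n → K :=
  x + (W * Aᵀ * S) *ᵥ ((Sᵀ * A * W * Aᵀ * S)⁻¹ *ᵥ (Sᵀ *ᵥ (b - A *ᵥ x)))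

theorem transpose_mulVec_sub_mulVec_projectionStep [Fintype m] [Fintype n] [Fintype k] [CommRing K]
    [DecidableEq k] {A : Matrix m n K} {W : Matrix n n K} {S : Matrix m k K}
    (hM : IsUnit (Sᵀ * A * W * Aᵀ * S)) (b : m → K) (x : n → K) :
    Sᵀ *ᵥ (b - A *ᵥ projectionStep A W S b x) = 0 := by
  set M := Sᵀ * A * W * Aᵀ * S
  have hSAWAS : Sᵀ * (A * (W * Aᵀ * S)) = M := by simp only [M, Matrix.mul_assoc]
  have hr : b - A *ᵥ projectionStep A W S b x
      = (b - A *ᵥ x) - (A * (W * Aᵀ * S)) *ᵥ (M⁻¹ *ᵥ (Sᵀ *ᵥ (b - A *ᵥ x))) := by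
    rw [projectionStep, mulVec_add, mulVec_mulVec]
    abel
  rw [hr, mulVec_sub, mulVec_mulVec, hSAWAS, mulVec_mulVec, mulVec_mulVec,
    mul_nonsing_inv _ ((isUnit_iff_isUnit_det M).mp hM), Matrix.one_mul, sub_self]

theorem exists_mul_eq_of_forall_col_mem_range [Fintype n] [CommRing K] {A : Matrix m n K}
    {S : Matrix m k K} (hS : ∀ j, ∃ u, A *ᵥ u = fun i => S i j) :
    ∃ U : Matrix n k K, A * U = S := by
  choose U hU using hS
  refine ⟨(of U)ᵀ, ?_⟩
  ext i j
  rw [← congrFun (hU j) i]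
  simp [mul_apply, mulVec, dotProduct]

theorem isUnit_of_mul_eq_of_injective_mulVec [Fintype n] [Field K] [DecidableEq n]
    {A : Matrix m n K} {U : Matrix n n K} {S : Matrix m n K}
    (hAU : A * U = S) (hS : Function.Injective S.mulVec) : IsUnit U := by
  rw [← mulVec_injective_iff_isUnit]
  refine Function.Injective.of_comp (f := A.mulVec) ?_
  simpa only [Function.comp_def, mulVec_mulVec, hAU] using hS

theorem eq_zero_of_transpose_mul_mulVec_eq_zero [Fintype m] [Fintype n] [DecidableEq n]
    {A : Matrix m n ℝ} {U : Matrix n n ℝ} (hA : Function.Injective A.mulVec) (hU : IsUnit U)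
    {v : n → ℝ} (h : (A * U)ᵀ *ᵥ (A *ᵥ v) = 0) : v = 0 := by
  have hAtA : (Aᵀ * A) *ᵥ v = 0 :=
    mulVec_injective_iff_isUnit.mpr ((isUnit_transpose U).mpr hU) <| by
      rwa [mulVec_zero, mulVec_mulVec, ← Matrix.mul_assoc, ← transpose_mul, ← mulVec_mulVec]
  have hAv : A *ᵥ v = 0 := by
    rwa [← conjTranspose_eq_transpose_of_trivial, conjTranspose_mul_self_mulVec_eq_zero] at hAtA
  exact hA (by rw [hAv, mulVec_zero])

end Matrix

theorem stmt0_general (m n : ℕ)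
    (A : Matrix (Fin m) (Fin n) ℝ)
    (hA : LinearIndependent ℝ (fun j i => A i j))
    (W : Matrix (Fin n) (Fin n) ℝ)
    (w : Fin n → ℝ) (b : Fin m → ℝ) (hb : b = A.mulVec w)
    (x : ℕ → Fin n → ℝ)
    (S : (k : ℕ) → Matrix (Fin m) (Fin k) ℝ)
    (hinv : ∀ k, 1 ≤ k → k ≤ n → IsUnit ((S k)ᵀ * A * W * Aᵀ * S k))
    (hx : ∀ k, 1 ≤ k → k ≤ n →
      x k = x (k - 1) +
        (W * Aᵀ * S k).mulVec
          (((S k)ᵀ * A * W * Aᵀ * S k)⁻¹.mulVec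
            ((S k)ᵀ.mulVec (b - A.mulVec (x (k - 1))))))
    (hSn : LinearIndependent ℝ (fun j i => S n i j))
    (hrange : ∀ j : Fin n, ∃ u : Fin n → ℝ, A.mulVec u = fun i => S n i j) :
    x n = w ∧ A.mulVec (x n) = b := by
  suffices hxw : x n = w from ⟨hxw, by rw [hxw, hb]⟩
  rcases Nat.eq_zero_or_pos n with rfl | hn
  · exact Subsingleton.elim _ _
  have horth : (S n)ᵀ *ᵥ (b - A *ᵥ x n) = 0 := by
    rw [hx n hn le_rfl]
    exact transpose_mulVec_sub_mulVec_projectionStep (hinv n hn le_rfl) b _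
  obtain ⟨U, hAU⟩ := exists_mul_eq_of_forall_col_mem_range hrange
  have hU : IsUnit U := isUnit_of_mul_eq_of_injective_mulVec hAU (mulVec_injective_iff.mpr hSn)
  rw [hb, ← mulVec_sub, ← hAU] at horth
  exact (sub_eq_zero.mp (eq_zero_of_transpose_mul_mulVec_eq_zero
    (mulVec_injective_iff.mpr hA) hU horth)).symm

/-- Finite termination of the projection iteration when `m ≥ n`, `A` has full
column rank, and the final sketch `S n` has full column rank with columns in the
range of `A`: the `n`-th iterate solves `A x = b` exactly (`x n = w`). -/
theorem stmt0 (m n : ℕ) (hmn : n ≤ m)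
    (A : Matrix (Fin m) (Fin n) ℝ)
    (hA : LinearIndependent ℝ (fun j i => A i j))
    (W : Matrix (Fin n) (Fin n) ℝ) (hW : W.PosDef)
    (w : Fin n → ℝ) (b : Fin m → ℝ) (hb : b = A.mulVec w)
    (x : ℕ → Fin n → ℝ)
    (S : (k : ℕ) → Matrix (Fin m) (Fin k) ℝ)
    (hinv : ∀ k, 1 ≤ k → k ≤ n → IsUnit ((S k)ᵀ * A * W * Aᵀ * S k))
    (hx : ∀ k, 1 ≤ k → k ≤ n →
      x k = x (k - 1) +
        (W * Aᵀ * S k).mulVec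
          (((S k)ᵀ * A * W * Aᵀ * S k)⁻¹.mulVec
            ((S k)ᵀ.mulVec (b - A.mulVec (x (k - 1))))))
    (hSn : LinearIndependent ℝ (fun j i => S n i j))
    (hrange : ∀ j : Fin n, ∃ u : Fin n → ℝ, A.mulVec u = fun i => S n i j) :
    x n = w ∧ A.mulVec (x n) = b :=
  stmt0_general m n A hA W w b hb x S hinv hx hSn hrange
end

section
/- Let m ≥ n, let A ∈ ℝ^{m×n} have full column rank n, let W ∈ ℝ^{n×n} be symmetric positive definite, and let S ∈ ℝ^{m×n} have full column rank n with every column of S in the column space of A. Then the n×n matrix Sᵀ A is invertible, the n×n matrix Sᵀ A W Aᵀ S is invertible, and for every w ∈ ℝ^n, W Aᵀ S (Sᵀ A W Aᵀ S)⁻¹ Sᵀ (A w) = (Sᵀ A)⁻¹ Sᵀ (A w) = w. In particular, for any x ∈ ℝ^n and b = A w, one step of the update x ↦ x + W Aᵀ S (Sᵀ A W Aᵀ S)⁻¹ Sᵀ (b − A x) produces w exactly. -/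
open Matrix

/-!
The columns of `S` lie in the range of `A`, so `S = A U` for a square `U`, which is invertible
because `S` is injective. Hence `Aᵀ S = (Aᵀ A) U` is invertible, and so is its transpose
`M = Sᵀ A`. With `B = W Aᵀ S = W Mᵀ` the Gram matrix `Sᵀ A W Aᵀ S` factors as `M B`, so
`B (M B)⁻¹ M = 1`, and the projection step maps `A w` back to `w`.
-/

theorem Matrix.exists_mul_eq_of_forall_col_mem_range_s1 {R l m n : Type*} [CommSemiring R]
    [Fintype n] {A : Matrix m n R} {S : Matrix m l R}
    (h : ∀ j, ∃ u : n → R, A *ᵥ u = fun i => S i j) : ∃ U : Matrix n l R, A * U = S := by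
  choose u hu using h
  refine ⟨(of u)ᵀ, ?_⟩
  ext i j
  exact congr_fun (hu j) i

theorem Matrix.isUnit_transpose_mul_of_mul_eq {m n : Type*} [Fintype m] [Fintype n]
    [DecidableEq n] {A S : Matrix m n ℝ} {U : Matrix n n ℝ} (hA : Function.Injective A.mulVec)
    (hS : Function.Injective S.mulVec) (hAU : A * U = S) : IsUnit (Aᵀ * S) := by
  have hAtA : IsUnit (Aᵀ * A) := by
    simpa using (PosDef.conjTranspose_mul_self A hA).isUnit
  have hU : Function.Injective U.mulVec := by
    rw [← hAU] at hS
    exact .of_comp (f := A.mulVec) (by simpa only [Function.comp_def, mulVec_mulVec])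
  rw [← mulVec_injective_iff_isUnit, ← hAU, ← Matrix.mul_assoc]
  simpa only [Function.comp_def, mulVec_mulVec] using
    (mulVec_injective_iff_isUnit.mpr hAtA).comp hU

theorem Matrix.mul_mul_inv_mul_eq_one {n α : Type*} [Fintype n] [DecidableEq n] [CommRing α]
    {M B : Matrix n n α} (hM : IsUnit M) (hB : IsUnit B) : B * (M * B)⁻¹ * M = 1 := by
  rw [mul_inv_rev, ← Matrix.mul_assoc, mul_nonsing_inv _ ((isUnit_iff_isUnit_det B).mp hB),
    Matrix.one_mul, nonsing_inv_mul _ ((isUnit_iff_isUnit_det M).mp hM)]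

theorem stmt1_general (m n : ℕ)
    (A : Matrix (Fin m) (Fin n) ℝ)
    (hA : LinearIndependent ℝ (fun j i => A i j))
    (W : Matrix (Fin n) (Fin n) ℝ) (hW : W.PosDef)
    (S : Matrix (Fin m) (Fin n) ℝ)
    (hS : LinearIndependent ℝ (fun j i => S i j))
    (hrange : ∀ j : Fin n, ∃ u : Fin n → ℝ, A.mulVec u = fun i => S i j) :
    IsUnit (Sᵀ * A) ∧
    IsUnit (Sᵀ * A * W * Aᵀ * S) ∧
    (∀ w : Fin n → ℝ,
      (W * Aᵀ * S).mulVec ((Sᵀ * A * W * Aᵀ * S)⁻¹.mulVec (Sᵀ.mulVec (A.mulVec w))) = w ∧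
      (Sᵀ * A)⁻¹.mulVec (Sᵀ.mulVec (A.mulVec w)) = w) ∧
    (∀ w x : Fin n → ℝ,
      x + (W * Aᵀ * S).mulVec
        ((Sᵀ * A * W * Aᵀ * S)⁻¹.mulVec (Sᵀ.mulVec (A.mulVec w - A.mulVec x))) = w) := by
  obtain ⟨U, hAU⟩ := exists_mul_eq_of_forall_col_mem_range_s1 hrange
  have hAS : IsUnit (Aᵀ * S) := isUnit_transpose_mul_of_mul_eq
    (mulVec_injective_iff.mpr hA) (mulVec_injective_iff.mpr hS) hAU
  have hSA : IsUnit (Sᵀ * A) := by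
    simpa using (isUnit_transpose _).mpr hAS
  have hWAS : IsUnit (W * Aᵀ * S) := by
    simpa only [Matrix.mul_assoc] using hW.isUnit.mul hAS
  have hN : Sᵀ * A * W * Aᵀ * S = (Sᵀ * A) * (W * Aᵀ * S) := by simp only [Matrix.mul_assoc]
  have hproj : ∀ w, (W * Aᵀ * S) *ᵥ ((Sᵀ * A * W * Aᵀ * S)⁻¹ *ᵥ (Sᵀ *ᵥ (A *ᵥ w))) = w := by
    intro w
    rw [mulVec_mulVec, mulVec_mulVec, mulVec_mulVec, Matrix.mul_assoc _ Sᵀ A, hN,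
      mul_mul_inv_mul_eq_one hSA hWAS, one_mulVec]
  refine ⟨hSA, hN ▸ hSA.mul hWAS, fun w => ⟨hproj w, ?_⟩, fun w x => ?_⟩
  · rw [mulVec_mulVec, mulVec_mulVec, Matrix.mul_assoc,
      nonsing_inv_mul _ ((isUnit_iff_isUnit_det _).mp hSA), one_mulVec]
  · rw [← mulVec_sub, hproj, add_sub_cancel]

/-- For `m ≥ n`, `A` of full column rank, `W` symmetric positive definite, and a
full-column-rank sketch `S` whose columns lie in the range of `A`, the matrices
`Sᵀ A` and `Sᵀ A W Aᵀ S` are invertible and one projection step recovers the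
exact solution. -/
theorem stmt1 (m n : ℕ) (hmn : n ≤ m)
    (A : Matrix (Fin m) (Fin n) ℝ)
    (hA : LinearIndependent ℝ (fun j i => A i j))
    (W : Matrix (Fin n) (Fin n) ℝ) (hW : W.PosDef)
    (S : Matrix (Fin m) (Fin n) ℝ)
    (hS : LinearIndependent ℝ (fun j i => S i j))
    (hrange : ∀ j : Fin n, ∃ u : Fin n → ℝ, A.mulVec u = fun i => S i j) :
    IsUnit (Sᵀ * A) ∧
    IsUnit (Sᵀ * A * W * Aᵀ * S) ∧
    (∀ w : Fin n → ℝ,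
      (W * Aᵀ * S).mulVec ((Sᵀ * A * W * Aᵀ * S)⁻¹.mulVec (Sᵀ.mulVec (A.mulVec w))) = w ∧
      (Sᵀ * A)⁻¹.mulVec (Sᵀ.mulVec (A.mulVec w)) = w) ∧
    (∀ w x : Fin n → ℝ,
      x + (W * Aᵀ * S).mulVec
        ((Sᵀ * A * W * Aᵀ * S)⁻¹.mulVec (Sᵀ.mulVec (A.mulVec w - A.mulVec x))) = w) :=
  stmt1_general m n A hA W hW S hS hrange
end

section
/- Let m ≥ n, let A ∈ ℝ^{m×n} have full column rank n, let W ∈ ℝ^{n×n} be symmetric positive definite, let w ∈ ℝ^n and b = A w, and let x ∈ ℝ^n. Let S ∈ ℝ^{m×m} be invertible, set M = Sᵀ A W Aᵀ S, and let N ∈ ℝ^{m×m} satisfy the four Penrose conditions for M (M N M = M, N M N = N, (M N)ᵀ = M N, (N M)ᵀ = N M). Then x + W Aᵀ S N Sᵀ (b − A x) = w; in particular the iterate after this step solves A x = b. -/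
/-!
Write `B = Sᵀ A`, so that `M = B W Bᵀ` and the update is `W Bᵀ N B (w - x)`. The columns
of `B` are independent because `S` is invertible, so `B` can be cancelled on the left.
Cancelling it in `M N M = M` gives `X W Bᵀ = W Bᵀ` for `X = W Bᵀ N B`; transposing and
cancelling `B` once more gives `X W = W`, hence `X = 1`, and the update is exactly `w - x`.
-/

open Matrix

namespace Matrix

variable {l m n R : Type*} [Fintype m] [CommRing R]

theorem mul_left_cancel_of_mulVec_injective {B : Matrix l m R} (hB : Function.Injective B.mulVec)
    {P Q : Matrix m n R} (h : B * P = B * Q) : P = Q := by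
  ext i j
  have hcol : B *ᵥ (fun k => P k j) = B *ᵥ (fun k => Q k j) := funext fun i' => by
    simpa [mul_apply, mulVec, dotProduct] using congrFun₂ h i' j
  exact congrFun (hB hcol) i

variable [Fintype l] [DecidableEq m]

theorem mul_transpose_mul_mul_eq_one_of_mul_mul_eq {B : Matrix l m R}
    (hB : Function.Injective B.mulVec) {W : Matrix m m R} (hW : IsUnit W) {N : Matrix l l R}
    (h : B * W * Bᵀ * N * (B * W * Bᵀ) = B * W * Bᵀ) :
    W * Bᵀ * N * B = 1 := by
  set X := W * Bᵀ * N * B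
  have hXWB : X * (W * Bᵀ) = W * Bᵀ :=
    mul_left_cancel_of_mulVec_injective hB (by simpa only [X, Matrix.mul_assoc] using h)
  have hXW : (X * W)ᵀ = Wᵀ := by
    refine mul_left_cancel_of_mulVec_injective hB ?_
    calc B * (X * W)ᵀ = (X * (W * Bᵀ))ᵀ := by
          simp only [transpose_mul, transpose_transpose, Matrix.mul_assoc]
      _ = B * Wᵀ := by rw [hXWB, transpose_mul, transpose_transpose]
  exact hW.mul_left_injective (by simpa using congrArg transpose hXW)

end Matrix

theorem stmt2_general (m n : ℕ)
    (A : Matrix (Fin m) (Fin n) ℝ)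
    (hA : LinearIndependent ℝ (fun j i => A i j))
    (W : Matrix (Fin n) (Fin n) ℝ) (hW : W.PosDef)
    (w : Fin n → ℝ) (b : Fin m → ℝ) (hb : b = A.mulVec w)
    (x : Fin n → ℝ)
    (S : Matrix (Fin m) (Fin m) ℝ) (hS : IsUnit S)
    (M N : Matrix (Fin m) (Fin m) ℝ)
    (hM : M = Sᵀ * A * W * Aᵀ * S)
    (h1 : M * N * M = M) :
    x + (W * Aᵀ * S).mulVec (N.mulVec (Sᵀ.mulVec (b - A.mulVec x))) = w ∧
    A.mulVec (x + (W * Aᵀ * S).mulVec (N.mulVec (Sᵀ.mulVec (b - A.mulVec x)))) = b := by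
  have hB : Function.Injective (Sᵀ * A).mulVec := by
    have hSt : Function.Injective Sᵀ.mulVec :=
      mulVec_injective_of_isUnit ((isUnit_transpose S).mpr hS)
    have hcomp : (Sᵀ * A).mulVec = Sᵀ.mulVec ∘ A.mulVec :=
      funext fun v => (mulVec_mulVec v Sᵀ A).symm
    exact hcomp ▸ hSt.comp (mulVec_injective_iff.mpr hA)
  have hM' : M = Sᵀ * A * W * (Sᵀ * A)ᵀ := by
    rw [hM, transpose_mul, transpose_transpose]
    simp only [Matrix.mul_assoc]
  have hinv := mul_transpose_mul_mul_eq_one_of_mul_mul_eq hB hW.isUnit (hM' ▸ h1)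
  have hstep : (W * Aᵀ * S) *ᵥ (N *ᵥ (Sᵀ *ᵥ (b - A *ᵥ x))) = w - x := by
    have hprod : W * Aᵀ * S * N * Sᵀ * A = 1 := by
      rw [← hinv, transpose_mul, transpose_transpose]
      simp only [Matrix.mul_assoc]
    rw [hb, ← mulVec_sub, mulVec_mulVec, mulVec_mulVec, mulVec_mulVec, hprod, one_mulVec]
  rw [hstep, add_sub_cancel, hb]
  exact ⟨rfl, rfl⟩

/-- With a square invertible sketch `S` and `N` the Moore–Penrose pseudoinverse
of `M = Sᵀ A W Aᵀ S` (characterized by the four Penrose conditions), one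
projection step recovers the exact solution `w` of `A x = b`. -/
theorem stmt2 (m n : ℕ) (hmn : n ≤ m)
    (A : Matrix (Fin m) (Fin n) ℝ)
    (hA : LinearIndependent ℝ (fun j i => A i j))
    (W : Matrix (Fin n) (Fin n) ℝ) (hW : W.PosDef)
    (w : Fin n → ℝ) (b : Fin m → ℝ) (hb : b = A.mulVec w)
    (x : Fin n → ℝ)
    (S : Matrix (Fin m) (Fin m) ℝ) (hS : IsUnit S)
    (M N : Matrix (Fin m) (Fin m) ℝ)
    (hM : M = Sᵀ * A * W * Aᵀ * S)
    (h1 : M * N * M = M)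
    (h2 : N * M * N = N)
    (h3 : (M * N)ᵀ = M * N)
    (h4 : (N * M)ᵀ = N * M) :
    x + (W * Aᵀ * S).mulVec (N.mulVec (Sᵀ.mulVec (b - A.mulVec x))) = w ∧
    A.mulVec (x + (W * Aᵀ * S).mulVec (N.mulVec (Sᵀ.mulVec (b - A.mulVec x)))) = b :=
  stmt2_general m n A hA W hW w b hb x S hS M N hM h1
end

section
/- Let m ≥ n, let A ∈ ℝ^{m×n} have full column rank n, let W ∈ ℝ^{n×n} be symmetric positive definite, let w ∈ ℝ^n and b = A w, and let x ∈ ℝ^n. Suppose S ∈ ℝ^{m×l} with n ≤ l is partitioned as S = [S₁ S₂], where S₁ ∈ ℝ^{m×n} has full column rank n with every column of S₁ in the column space of A, and Aᵀ S₂ = 0. Let N ∈ ℝ^{l×l} satisfy the four Penrose conditions for Sᵀ A W Aᵀ S. Then x + W Aᵀ S N Sᵀ (b − A x) = w. -/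
open Matrix

lemma posdef_cancel {n : ℕ} {k : Type*} [Fintype k] {W : Matrix (Fin n) (Fin n) ℝ}
    (hW : W.PosDef) {X : Matrix (Fin n) k ℝ} (h : Xᵀ * W * X = 0) : X = 0 := by
  ext i j
  by_contra hij
  have hv : (fun i => X i j) ≠ 0 := fun hv => hij (by simpa using congr_fun hv i)
  have hpos := hW.dotProduct_mulVec_pos hv
  simp only [star_trivial] at hpos
  have hz : (Xᵀ * W * X) j j = dotProduct (fun i => X i j) (W *ᵥ (fun i => X i j)) := by
    simp [Matrix.mul_apply, dotProduct, Matrix.mulVec, Finset.mul_sum, Finset.sum_mul, mul_assoc]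
    exact Finset.sum_comm
  rw [h] at hz
  simp only [Matrix.zero_apply] at hz
  linarith

/-- If the sketch `S = [S₁ S₂]` consists of a full-column-rank block `S₁` with
columns in the range of `A` together with a block `S₂` satisfying `Aᵀ S₂ = 0`,
and `N` is the Moore–Penrose pseudoinverse of `Sᵀ A W Aᵀ S`, then one
projection step recovers the exact solution `w`. -/
theorem stmt3 (m n q : ℕ) (hmn : n ≤ m)
    (A : Matrix (Fin m) (Fin n) ℝ)
    (hA : LinearIndependent ℝ (fun j i => A i j))
    (W : Matrix (Fin n) (Fin n) ℝ) (hW : W.PosDef)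
    (w : Fin n → ℝ) (b : Fin m → ℝ) (hb : b = A.mulVec w)
    (x : Fin n → ℝ)
    (S₁ : Matrix (Fin m) (Fin n) ℝ) (S₂ : Matrix (Fin m) (Fin q) ℝ)
    (hS₁ : LinearIndependent ℝ (fun j i => S₁ i j))
    (hrange : ∀ j : Fin n, ∃ u : Fin n → ℝ, A.mulVec u = fun i => S₁ i j)
    (hS₂ : Aᵀ * S₂ = 0)
    (S : Matrix (Fin m) (Fin n ⊕ Fin q) ℝ)
    (hS : S = Matrix.fromCols S₁ S₂)
    (M N : Matrix (Fin n ⊕ Fin q) (Fin n ⊕ Fin q) ℝ)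
    (hM : M = Sᵀ * A * W * Aᵀ * S)
    (h1 : M * N * M = M)
    (h2 : N * M * N = N)
    (h3 : (M * N)ᵀ = M * N)
    (h4 : (N * M)ᵀ = N * M) :
    x + (W * Aᵀ * S).mulVec (N.mulVec (Sᵀ.mulVec (b - A.mulVec x))) = w := by
  have hAinj : Function.Injective A.mulVec := Matrix.mulVec_injective_iff.mpr hA
  have hS₁inj : Function.Injective S₁.mulVec := Matrix.mulVec_injective_iff.mpr hS₁
  -- factor S₁ = A * U
  choose U hU using hrange
  set Umat : Matrix (Fin n) (Fin n) ℝ := Matrix.of (fun i j => U j i) with hUmat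
  have hAU : A * Umat = S₁ := by
    ext i j
    have := congr_fun (hU j) i
    simpa [Matrix.mul_apply, Matrix.mulVec, dotProduct, hUmat] using this
  have hUinj : Function.Injective Umat.mulVec := by
    intro u v huv
    apply hS₁inj
    rw [← hAU, ← Matrix.mulVec_mulVec, ← Matrix.mulVec_mulVec, huv]
  have hUunit : IsUnit Umat := Matrix.mulVec_injective_iff_isUnit.mp hUinj
  have hAAinj : Function.Injective (Aᵀ * A).mulVec := by
    intro u v huv
    apply hAinj
    have h0 : Aᵀ *ᵥ (A *ᵥ u - A *ᵥ v) = 0 := by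
      rw [Matrix.mulVec_sub]
      simp [Matrix.mulVec_mulVec, huv]
    have hdp : dotProduct (A *ᵥ u - A *ᵥ v) (A *ᵥ u - A *ᵥ v) = 0 := by
      have := congr_arg (dotProduct (u - v)) h0
      rwa [Matrix.dotProduct_mulVec, Matrix.vecMul_transpose, Matrix.mulVec_sub,
        dotProduct_zero] at this
    exact sub_eq_zero.mp (dotProduct_self_eq_zero.mp hdp)
  have hAAunit : IsUnit (Aᵀ * A) := Matrix.mulVec_injective_iff_isUnit.mp hAAinj
  set K := Aᵀ * S₁ with hK
  have hKeq : K = (Aᵀ * A) * Umat := by rw [hK, ← hAU, Matrix.mul_assoc]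
  have hKunit : IsUnit K := hKeq ▸ hAAunit.mul hUunit
  set B := Aᵀ * S with hB
  have hBcols : B = Matrix.fromCols K 0 := by
    rw [hB, hS, Matrix.mul_fromCols, hS₂]
  have hMB : M = Bᵀ * W * B := by
    rw [hM, hB, Matrix.transpose_mul, Matrix.transpose_transpose]
    simp only [Matrix.mul_assoc]
  -- main identity: B * (N * (Bᵀ * W * B)) = B
  set Y := N * (Bᵀ * W * B) - 1 with hY
  have hX0 : Bᵀ * W * (B * Y) = 0 := by
    have h1' := h1
    rw [hMB] at h1'
    simp only [hY, Matrix.mul_sub, Matrix.mul_one, ← Matrix.mul_assoc] at h1' ⊢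
    rw [h1', sub_self]
  have hXzero : B * Y = 0 := by
    apply posdef_cancel hW
    have : (B * Y)ᵀ * W * (B * Y) = Yᵀ * (Bᵀ * W * (B * Y)) := by
      simp only [Matrix.transpose_mul, Matrix.mul_assoc]
    rw [this, hX0, Matrix.mul_zero]
  have hE : B * (N * (Bᵀ * W * B)) = B := by
    have := hXzero
    rw [hY, Matrix.mul_sub, Matrix.mul_one, sub_eq_zero] at this
    exact this
  set R := Matrix.fromRows K⁻¹ (0 : Matrix (Fin q) (Fin n) ℝ) with hR
  have hBR : B * R = 1 := by
    rw [hBcols, hR, Matrix.fromCols_mul_fromRows,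
      Matrix.mul_nonsing_inv K ((Matrix.isUnit_iff_isUnit_det K).mp hKunit)]
    simp
  have hleft : B * N * Bᵀ * W = 1 := by
    calc B * N * Bᵀ * W = B * N * Bᵀ * W * (B * R) := by rw [hBR, Matrix.mul_one]
      _ = (B * (N * (Bᵀ * W * B))) * R := by simp only [Matrix.mul_assoc]
      _ = B * R := by rw [hE]
      _ = 1 := hBR
  have hright : W * (B * N * Bᵀ) = 1 := mul_eq_one_comm.mp hleft
  subst hb
  rw [← Matrix.mulVec_sub]
  simp only [Matrix.mulVec_mulVec]
  have hone : W * Aᵀ * S * N * (Sᵀ * A) = 1 := by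
    have hBt : Sᵀ * A = Bᵀ := by rw [hB, Matrix.transpose_mul, Matrix.transpose_transpose]
    rw [hBt]
    calc W * Aᵀ * S * N * Bᵀ = W * (B * N * Bᵀ) := by
          rw [hB]; simp only [Matrix.mul_assoc]
      _ = 1 := hright
  simp only [Matrix.mulVec_mulVec, ← Matrix.mul_assoc]
  simp only [← Matrix.mul_assoc] at hone
  rw [hone, Matrix.one_mulVec]
  simp
end

section
/- Let m < n, let A ∈ ℝ^{m×n} be any real matrix, let W ∈ ℝ^{n×n} be symmetric positive definite, let b ∈ ℝ^m lie in the column space of A, and let x ∈ ℝ^n be arbitrary. Let S ∈ ℝ^{m×m} be invertible and let N ∈ ℝ^{m×m} satisfy the four Penrose conditions for Sᵀ A W Aᵀ S. Then A (x + W Aᵀ S N Sᵀ (b − A x)) = b; that is, the iterate after one such step solves the underdetermined linear system A x = b. -/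
open Matrix

/-- Underdetermined case `m < n`: with a square invertible sketch `S` and `N`
the Moore–Penrose pseudoinverse of `Sᵀ A W Aᵀ S`, one projection step produces
an exact solution of the consistent system `A x = b`. -/
theorem stmt4 (m n : ℕ) (hmn : m < n)
    (A : Matrix (Fin m) (Fin n) ℝ)
    (W : Matrix (Fin n) (Fin n) ℝ) (hW : W.PosDef)
    (b : Fin m → ℝ) (hb : ∃ w : Fin n → ℝ, A.mulVec w = b)
    (x : Fin n → ℝ)
    (S : Matrix (Fin m) (Fin m) ℝ) (hS : IsUnit S)
    (M N : Matrix (Fin m) (Fin m) ℝ)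
    (hM : M = Sᵀ * A * W * Aᵀ * S)
    (h1 : M * N * M = M)
    (h2 : N * M * N = N)
    (h3 : (M * N)ᵀ = M * N)
    (h4 : (N * M)ᵀ = N * M) :
    A.mulVec (x + (W * Aᵀ * S).mulVec (N.mulVec (Sᵀ.mulVec (b - A.mulVec x)))) = b := by
  obtain ⟨w, hw⟩ := hb
  -- square root of W
  open scoped MatrixOrder in set B := CFC.sqrt W with hBdef
  open scoped MatrixOrder in have hBB : B * B = W := CFC.sqrt_mul_sqrt_self W hW.posSemidef.nonneg
  have hBsym : Bᵀ = B := by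
    open scoped MatrixOrder in have h := (CFC.sqrt_nonneg W).posSemidef.1
    simpa [Matrix.IsHermitian] using h
  have hBunit : IsUnit B := by
    rw [Matrix.isUnit_iff_isUnit_det]
    have hdW : IsUnit W.det := hW.det_pos.ne'.isUnit
    have hdd : B.det * B.det = W.det := by rw [← Matrix.det_mul, hBB]
    exact isUnit_of_mul_isUnit_left (hdd ▸ hdW)
  have hSTunit : IsUnit Sᵀ := (Matrix.isUnit_iff_isUnit_det _).2
    (by rw [Matrix.det_transpose]; exact (Matrix.isUnit_iff_isUnit_det _).1 hS)
  -- G with M = G * Gᵀ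
  set G := Sᵀ * A * B with hGdef
  have hMG : M = G * Gᵀ := by
    rw [hM, hGdef]
    simp only [Matrix.transpose_mul, Matrix.transpose_transpose, hBsym]
    rw [← hBB]
    simp only [Matrix.mul_assoc]
  have hMsym : Mᵀ = M := by
    rw [hMG, Matrix.transpose_mul, Matrix.transpose_transpose]
  -- auxiliary: M Nᵀ M = M
  have h1t : M * Nᵀ * M = M := by
    have ht : (M * Nᵀ * M)ᵀ = M := by
      simp only [Matrix.transpose_mul, Matrix.transpose_transpose, hMsym]
      rw [← Matrix.mul_assoc]; exact h1
    calc M * Nᵀ * M = (M * Nᵀ * M)ᵀᵀ := (Matrix.transpose_transpose _).symm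
    _ = Mᵀ := by rw [ht]
    _ = M := hMsym
  have hGGt : ∀ (X : Matrix (Fin m) (Fin m) ℝ), G * (Gᵀ * X) = M * X := fun X => by
    rw [← Matrix.mul_assoc, ← hMG]
  -- key identity: M N G = G
  have hkey : M * N * G = G := by
    have t1 : M * N * G * (M * N * G)ᵀ = M := by
      simp only [Matrix.transpose_mul, hMsym, Matrix.mul_assoc]
      rw [hGGt]
      simp only [← Matrix.mul_assoc]
      rw [h1, h1t]
    have t2 : M * N * G * Gᵀ = M := by
      rw [Matrix.mul_assoc (M * N) G Gᵀ, ← hMG]; exact h1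
    have t3 : G * (M * N * G)ᵀ = M := by
      simp only [Matrix.transpose_mul, hMsym, Matrix.mul_assoc]
      rw [hGGt]
      simp only [← Matrix.mul_assoc]
      exact h1t
    have hK : (M * N * G - G) * (M * N * G - G)ᵀ = 0 := by
      rw [Matrix.transpose_sub, Matrix.sub_mul, Matrix.mul_sub, Matrix.mul_sub,
        t1, t2, t3, ← hMG]
      abel
    have hzero : M * N * G - G = 0 := by
      have hmc := Matrix.self_mul_conjTranspose_eq_zero (A := M * N * G - G)
      apply hmc.mp
      simpa using hK
    exact sub_eq_zero.mp hzero
  -- deduce A W Aᵀ S N Sᵀ A = A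
  have hkeyL : Sᵀ * A * W * Aᵀ * S * N * Sᵀ * A * B = Sᵀ * A * B := by
    have h := hkey
    rw [hM, hGdef] at h
    have h' := congrArg id h
    simpa only [Matrix.mul_assoc, id] using h'
  have hBdet : IsUnit B.det := (Matrix.isUnit_iff_isUnit_det _).1 hBunit
  have hSTdet : IsUnit Sᵀ.det := (Matrix.isUnit_iff_isUnit_det _).1 hSTunit
  have step2 : Sᵀ * A * W * Aᵀ * S * N * Sᵀ * A = Sᵀ * A := by
    have h := congrArg (fun Z => Z * B⁻¹) hkeyL
    simp only [Matrix.mul_assoc] at h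
    rw [Matrix.mul_nonsing_inv _ hBdet, Matrix.mul_one] at h
    simpa only [← Matrix.mul_assoc] using h
  have hbig : A * W * Aᵀ * S * N * Sᵀ * A = A := by
    have h := congrArg (fun Z => (Sᵀ)⁻¹ * Z) step2
    simp only [← Matrix.mul_assoc] at h
    rwa [Matrix.nonsing_inv_mul _ hSTdet, Matrix.one_mul] at h
  -- finish
  have hr : b - A.mulVec x = A.mulVec (w - x) := by
    rw [Matrix.mulVec_sub, hw]
  rw [Matrix.mulVec_add, hr]
  simp only [Matrix.mulVec_mulVec]
  have hprod : A * (W * Aᵀ * S * (N * (Sᵀ * A))) = A := by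
    simpa only [← Matrix.mul_assoc] using hbig
  rw [hprod, Matrix.mulVec_sub, hw]
  abel
end

section
/- Let y₁,…,y_k ∈ ℝ^n and set Y_j = [y₁ … y_j] ∈ ℝ^{n×j}; assume Y_k has full column rank k (hence every Y_j does). For j = 1,…,k define t̂_j = (Y_{j−1}ᵀ Y_{j−1})⁻¹ Y_{j−1}ᵀ y_j ∈ ℝ^{j−1} (the empty vector for j = 1) and δ_j = y_jᵀ y_j − y_jᵀ Y_{j−1} t̂_j, and define t_j ∈ ℝ^k by: its first j−1 entries are those of t̂_j, its j-th entry is −1, and its remaining entries are 0. Let R = [t₁ … t_k] ∈ ℝ^{k×k} (an upper triangular matrix) and D = diag(1/δ₁,…,1/δ_k). Then each δ_j > 0 and (Y_kᵀ Y_k)⁻¹ = R D Rᵀ. -/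
open Matrix

/-- `colCat y k` is the matrix `[y 0 … y (k-1)]` whose `l`-th column is `y l`. -/
def colCat {n : ℕ} (y : ℕ → Fin n → ℝ) (k : ℕ) : Matrix (Fin n) (Fin k) ℝ :=
  Matrix.of fun i l => y l.val i

lemma posDef_transpose_mul_self' {m n : Type*} [Fintype m] [Fintype n] [DecidableEq n]
    (Y : Matrix m n ℝ) (h : ∀ x, Y.mulVec x = 0 → x = 0) : (Yᵀ * Y).PosDef := by
  rw [posDef_iff_dotProduct_mulVec]
  constructor
  · show (Yᵀ * Y)ᴴ = Yᵀ * Y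
    rw [conjTranspose_eq_transpose_of_trivial, transpose_mul, transpose_transpose]
  · intro x hx
    have hx' : Y *ᵥ x ≠ 0 := fun hc => hx (h x hc)
    have he : star x ⬝ᵥ (Yᵀ * Y) *ᵥ x = (Y *ᵥ x) ⬝ᵥ (Y *ᵥ x) := by
      rw [star_trivial, ← mulVec_mulVec, dotProduct_mulVec, vecMul_transpose]
    rw [he]
    exact lt_of_le_of_ne (Finset.sum_nonneg fun i _ => mul_self_nonneg _)
      (fun hc => hx' (dotProduct_self_eq_zero.mp hc.symm))

lemma sum_dite_fin {k m : ℕ} (hm : m ≤ k) (g : Fin m → ℝ) :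
    ∑ l : Fin k, (if h : l.val < m then g ⟨l.val, h⟩ else 0) = ∑ l : Fin m, g l := by
  have e1 : ∀ (N : ℕ), ∑ l : Fin N, (if h : l.val < m then g ⟨l.val, h⟩ else 0)
      = ∑ i ∈ Finset.range N, (if h : i < m then g ⟨i, h⟩ else 0) := fun N =>
    Fin.sum_univ_eq_sum_range (fun i => if h : i < m then g ⟨i, h⟩ else 0) N
  rw [e1 k]
  rw [show (∑ l : Fin m, g l) = ∑ l : Fin m, (if h : l.val < m then g ⟨l.val, h⟩ else 0) from
    Finset.sum_congr rfl fun l _ => by rw [dif_pos l.isLt]]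
  rw [e1 m]
  exact (Finset.sum_subset (Finset.range_subset_range.2 hm)
    (fun x _ hx => by rw [dif_neg (by simpa using hx)])).symm

/-- The Gram–Schmidt residual of `y j` against `y 0, …, y (j-1)`. -/
noncomputable def gsRes {n : ℕ} (y : ℕ → Fin n → ℝ) (j : ℕ) : Fin n → ℝ :=
  y j - (colCat y j).mulVec
    ((((colCat y j)ᵀ * colCat y j)⁻¹).mulVec ((colCat y j)ᵀ.mulVec (y j)))

/-- Triangular factorization of the inverse Gram matrix: if `Y k = [y 0 … y (k-1)]`
has full column rank, then with `t̂ j = (Y jᵀ Y j)⁻¹ Y jᵀ (y j)`,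
`δ j = (y j)ᵀ (y j) − (y j)ᵀ (Y j) t̂ j`, the upper triangular matrix `R` whose
`j`-th column has entries `t̂ j` above position `j`, `−1` at position `j` and `0`
below, and `D = diag (1/δ j)`, every `δ j` is positive and
`(Y kᵀ Y k)⁻¹ = R D Rᵀ`. -/
theorem stmt6 (n k : ℕ) (y : ℕ → Fin n → ℝ)
    (hfull : LinearIndependent ℝ (fun (j : Fin k) => y j.val))
    (δ : Fin k → ℝ)
    (hδ : ∀ j : Fin k, δ j =
      y j.val ⬝ᵥ y j.val -
        y j.val ⬝ᵥ (colCat y j.val).mulVec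
          (((colCat y j.val)ᵀ * colCat y j.val)⁻¹.mulVec
            ((colCat y j.val)ᵀ.mulVec (y j.val))))
    (t : Fin k → Fin k → ℝ)
    (ht : ∀ j l : Fin k, t j l =
      if h : l.val < j.val then
        (((colCat y j.val)ᵀ * colCat y j.val)⁻¹.mulVec
          ((colCat y j.val)ᵀ.mulVec (y j.val))) ⟨l.val, h⟩
      else if l.val = j.val then -1 else 0)
    (R : Matrix (Fin k) (Fin k) ℝ) (hR : ∀ i j : Fin k, R i j = t j i) :
    (∀ j : Fin k, 0 < δ j) ∧
      ((colCat y k)ᵀ * colCat y k)⁻¹ = R * Matrix.diagonal (fun j => 1 / δ j) * Rᵀ := by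
  classical
  -- mulVec injectivity for every leading block
  have hmv : ∀ (m : ℕ) (hm : m ≤ k) (x : Fin m → ℝ), (colCat y m).mulVec x = 0 → x = 0 := by
    intro m hm x hx
    have hli : LinearIndependent ℝ (fun l : Fin m => y l.val) := by
      have := hfull.comp (Fin.castLE hm) (Fin.castLE_injective hm)
      exact this
    rw [Fintype.linearIndependent_iff] at hli
    have hs : (∑ l, x l • y l.val) = (colCat y m).mulVec x := by
      funext i
      simp [Matrix.mulVec, dotProduct, colCat, mul_comm, Finset.sum_apply]
    exact funext fun l => hli x (hs.trans hx) l
  -- invertibility of the leading Gram matrices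
  have hunit : ∀ (m : ℕ), m ≤ k → IsUnit ((colCat y m)ᵀ * colCat y m).det := fun m hm =>
    (posDef_transpose_mul_self' (colCat y m) (hmv m hm)).det_pos.ne'.isUnit
  -- orthogonality of the residual against the earlier columns
  have horth : ∀ j : Fin k, (colCat y j.val)ᵀ.mulVec (gsRes y j.val) = 0 := by
    intro j
    have h1 : (colCat y j.val)ᵀ * colCat y j.val * ((colCat y j.val)ᵀ * colCat y j.val)⁻¹ = 1 :=
      mul_nonsing_inv _ (hunit j.val j.isLt.le)
    unfold gsRes
    rw [mulVec_sub, mulVec_mulVec, mulVec_mulVec, h1, one_mulVec, sub_self]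
  have hyl : ∀ (j : Fin k) (l : ℕ), l < j.val → y l ⬝ᵥ gsRes y j.val = 0 := by
    intro j l hl
    have := congrFun (horth j) ⟨l, hl⟩
    simpa [Matrix.mulVec, dotProduct, colCat, Matrix.transpose] using this
  have hproj : ∀ (j : Fin k) (v : Fin j.val → ℝ),
      (colCat y j.val *ᵥ v) ⬝ᵥ gsRes y j.val = 0 := by
    intro j v
    rw [dotProduct_comm, dotProduct_mulVec, ← mulVec_transpose, horth j, zero_dotProduct]
  -- δ j equals the squared norm of the residual
  have hδr : ∀ j : Fin k, δ j = y j.val ⬝ᵥ gsRes y j.val := by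
    intro j
    rw [hδ j]
    unfold gsRes
    rw [dotProduct_sub]
  have hself : ∀ j : Fin k, gsRes y j.val ⬝ᵥ gsRes y j.val = δ j := by
    intro j
    conv_lhs => rw [show gsRes y j.val ⬝ᵥ gsRes y j.val
      = y j.val ⬝ᵥ gsRes y j.val - (colCat y j.val *ᵥ
        (((colCat y j.val)ᵀ * colCat y j.val)⁻¹.mulVec
          ((colCat y j.val)ᵀ.mulVec (y j.val)))) ⬝ᵥ gsRes y j.val from by
        rw [← sub_dotProduct]; rfl]
    rw [hproj, sub_zero, hδr]
  -- positivity of δ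
  have hδpos : ∀ j : Fin k, 0 < δ j := by
    intro j
    have hne : gsRes y j.val ≠ 0 := by
      intro hc
      have hyj : y j.val = colCat y j.val *ᵥ
          (((colCat y j.val)ᵀ * colCat y j.val)⁻¹.mulVec
            ((colCat y j.val)ᵀ.mulVec (y j.val))) := by
        have := sub_eq_zero.mp hc
        exact this
      have hmem : y j.val ∈ Submodule.span ℝ
          ((fun i : Fin k => y i.val) '' {i : Fin k | i.val < j.val}) := by
        rw [hyj]
        have hexp : colCat y j.val *ᵥ
            (((colCat y j.val)ᵀ * colCat y j.val)⁻¹.mulVec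
              ((colCat y j.val)ᵀ.mulVec (y j.val)))
            = ∑ l : Fin j.val, (((colCat y j.val)ᵀ * colCat y j.val)⁻¹.mulVec
              ((colCat y j.val)ᵀ.mulVec (y j.val))) l • y l.val := by
          funext i
          simp [Matrix.mulVec, dotProduct, colCat, mul_comm, Finset.sum_apply]
        rw [hexp]
        exact Submodule.sum_mem _ fun l _ => Submodule.smul_mem _ _
          (Submodule.subset_span ⟨⟨l.val, l.isLt.trans j.isLt⟩, l.isLt, rfl⟩)
      exact hfull.notMem_span_image (by simp) hmem
    rw [← hself j]
    exact lt_of_le_of_ne (Finset.sum_nonneg fun i _ => mul_self_nonneg _)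
      (fun hc => hne (dotProduct_self_eq_zero.mp hc.symm))
  -- cross orthogonality
  have hcross : ∀ i j : Fin k, i ≠ j → gsRes y i.val ⬝ᵥ gsRes y j.val = 0 := by
    have key : ∀ i j : Fin k, i.val < j.val → gsRes y i.val ⬝ᵥ gsRes y j.val = 0 := by
      intro i j hij
      have h1 : (colCat y i.val)ᵀ.mulVec (gsRes y j.val) = 0 := by
        funext l
        have := hyl j l.val (l.isLt.trans hij)
        simpa [Matrix.mulVec, dotProduct, colCat, Matrix.transpose] using this
      have h2 : ∀ v : Fin i.val → ℝ, (colCat y i.val *ᵥ v) ⬝ᵥ gsRes y j.val = 0 := by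
        intro v
        rw [dotProduct_comm, dotProduct_mulVec, ← mulVec_transpose, h1, zero_dotProduct]
      conv_lhs => rw [show gsRes y i.val ⬝ᵥ gsRes y j.val
        = y i.val ⬝ᵥ gsRes y j.val - (colCat y i.val *ᵥ
          (((colCat y i.val)ᵀ * colCat y i.val)⁻¹.mulVec
            ((colCat y i.val)ᵀ.mulVec (y i.val)))) ⬝ᵥ gsRes y j.val from by
          rw [← sub_dotProduct]; rfl]
      rw [h2, hyl j i.val hij, sub_zero]
    intro i j hij
    rcases lt_or_gt_of_ne (fun hc : i.val = j.val => hij (Fin.ext hc)) with h | h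
    · exact key i j h
    · rw [dotProduct_comm]; exact key j i h
  -- columns of Y * R are the negated residuals
  have hcol : ∀ (j : Fin k) (s : Fin n), (colCat y k * R) s j = -(gsRes y j.val s) := by
    intro j s
    have hexp : (colCat y k * R) s j = ∑ l : Fin k, y l.val s * t j l := by
      simp [Matrix.mul_apply, colCat, hR]
    rw [hexp]
    have hterm : ∀ l : Fin k, y l.val s * t j l =
        (if h : l.val < j.val then
          y l.val s * (((colCat y j.val)ᵀ * colCat y j.val)⁻¹.mulVec
            ((colCat y j.val)ᵀ.mulVec (y j.val))) ⟨l.val, h⟩ else 0)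
        + (if l = j then -(y j.val s) else 0) := by
      intro l
      rw [ht]
      by_cases h1 : l.val < j.val
      · rw [dif_pos h1, dif_pos h1, if_neg (by intro hc; subst hc; exact lt_irrefl _ h1)]
        ring
      · by_cases h2 : l.val = j.val
        · rw [dif_neg h1, dif_neg h1, if_pos h2, if_pos (Fin.ext h2), h2]
          ring
        · rw [dif_neg h1, dif_neg h1, if_neg h2, if_neg (fun hc => h2 (by rw [hc]))]
          ring
    rw [Finset.sum_congr rfl fun l _ => hterm l, Finset.sum_add_distrib,
      show (∑ l : Fin k, if h : l.val < j.val then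
          y l.val s * (((colCat y j.val)ᵀ * colCat y j.val)⁻¹.mulVec
            ((colCat y j.val)ᵀ.mulVec (y j.val))) ⟨l.val, h⟩ else 0)
        = ∑ l : Fin j.val, y l.val s * (((colCat y j.val)ᵀ * colCat y j.val)⁻¹.mulVec
            ((colCat y j.val)ᵀ.mulVec (y j.val))) l from
        sum_dite_fin j.isLt.le (fun l => y l.val s *
          (((colCat y j.val)ᵀ * colCat y j.val)⁻¹.mulVec
            ((colCat y j.val)ᵀ.mulVec (y j.val))) l),
      Finset.sum_ite_eq' Finset.univ j fun _ => -(y j.val s),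
      if_pos (Finset.mem_univ j)]
    have hres : gsRes y j.val s = y j.val s - ∑ l : Fin j.val,
        y l.val s * (((colCat y j.val)ᵀ * colCat y j.val)⁻¹.mulVec
          ((colCat y j.val)ᵀ.mulVec (y j.val))) l := by
      rfl
    rw [hres]
    ring
  -- the key identity Rᵀ (YᵀY) R = diag δ
  have hkey : Rᵀ * ((colCat y k)ᵀ * colCat y k) * R = Matrix.diagonal δ := by
    have hassoc : Rᵀ * ((colCat y k)ᵀ * colCat y k) * R
        = (colCat y k * R)ᵀ * (colCat y k * R) := by
      rw [transpose_mul]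
      simp only [Matrix.mul_assoc]
    rw [hassoc]
    ext i j
    rw [Matrix.mul_apply]
    have : ∀ s : Fin n, (colCat y k * R)ᵀ i s * (colCat y k * R) s j
        = gsRes y i.val s * gsRes y j.val s := by
      intro s
      rw [Matrix.transpose_apply, hcol i s, hcol j s]
      ring
    rw [Finset.sum_congr rfl fun s _ => this s]
    by_cases hij : i = j
    · subst hij
      rw [Matrix.diagonal_apply_eq]
      exact hself i
    · rw [Matrix.diagonal_apply_ne _ hij]
      exact hcross i j hij
  -- R is invertible
  have hRdet : IsUnit R.det := by
    have htri : R.BlockTriangular id := by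
      intro i j hij
      have hji : (j : ℕ) < (i : ℕ) := hij
      rw [hR, ht, dif_neg (by omega), if_neg (by omega)]
    rw [Matrix.det_of_upperTriangular htri]
    have : ∀ i : Fin k, R i i = -1 := by
      intro i
      rw [hR, ht, dif_neg (lt_irrefl _), if_pos rfl]
    rw [Finset.prod_congr rfl fun i _ => this i, Finset.prod_const]
    exact (pow_ne_zero _ (by norm_num : (-1 : ℝ) ≠ 0)).isUnit
  refine ⟨hδpos, ?_⟩
  -- conclude
  haveI : Invertible R := R.invertibleOfIsUnitDet hRdet
  have hDδ : Matrix.diagonal (fun j => 1 / δ j) * Matrix.diagonal δ = 1 := by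
    rw [Matrix.diagonal_mul_diagonal]
    rw [show (fun j => 1 / δ j * δ j) = fun _ => (1 : ℝ) from
      funext fun j => one_div_mul_cancel (hδpos j).ne']
    exact Matrix.diagonal_one
  have hleft : (R * Matrix.diagonal (fun j => 1 / δ j) * Rᵀ) * ((colCat y k)ᵀ * colCat y k)
      = 1 := by
    have h1 : (R * Matrix.diagonal (fun j => 1 / δ j) * Rᵀ) * ((colCat y k)ᵀ * colCat y k) * R
        = R := by
      calc (R * Matrix.diagonal (fun j => 1 / δ j) * Rᵀ) * ((colCat y k)ᵀ * colCat y k) * R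
          = R * Matrix.diagonal (fun j => 1 / δ j) *
            (Rᵀ * ((colCat y k)ᵀ * colCat y k) * R) := by
            simp only [Matrix.mul_assoc]
        _ = R * (Matrix.diagonal (fun j => 1 / δ j) * Matrix.diagonal δ) := by
            rw [hkey, Matrix.mul_assoc]
        _ = R := by rw [hDδ, Matrix.mul_one]
    calc (R * Matrix.diagonal (fun j => 1 / δ j) * Rᵀ) * ((colCat y k)ᵀ * colCat y k)
        = (R * Matrix.diagonal (fun j => 1 / δ j) * Rᵀ) * ((colCat y k)ᵀ * colCat y k)
          * (R * ⅟R) := by rw [mul_invOf_self, Matrix.mul_one]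
      _ = (R * Matrix.diagonal (fun j => 1 / δ j) * Rᵀ) * ((colCat y k)ᵀ * colCat y k) * R
          * ⅟R := by simp only [Matrix.mul_assoc]
      _ = R * ⅟R := by rw [h1]
      _ = 1 := mul_invOf_self R
  exact Matrix.inv_eq_left_inv hleft
end

section
/- Let A ∈ ℝ^{m×n}, let S' ∈ ℝ^{m×(k−1)} and s ∈ ℝ^m, and set S = [S' s] ∈ ℝ^{m×k}, Y' = Aᵀ S', y = Aᵀ s, and Y = Aᵀ S = [Y' y]. Assume Y has full column rank k and let r ∈ ℝ^m satisfy S'ᵀ r = 0. Define t̂ = (Y'ᵀ Y')⁻¹ Y'ᵀ y and δ = yᵀ y − yᵀ Y' t̂. Then δ > 0 and the projection update satisfies Aᵀ S (Sᵀ A Aᵀ S)⁻¹ Sᵀ r = ((sᵀ r)/δ) (y − Y' t̂). -/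
open Matrix

lemma gram_isUnit_of_inj {ι : Type*} [Fintype ι] [DecidableEq ι] {n : ℕ}
    (M : Matrix (Fin n) ι ℝ) (h : Function.Injective M.mulVec) :
    IsUnit (Mᵀ * M) := by
  rw [← Matrix.mulVec_injective_iff_isUnit]
  have hker : LinearMap.ker (Mᵀ * M).mulVecLin = ⊥ := by
    rw [Matrix.ker_mulVecLin_transpose_mul_self, LinearMap.ker_eq_bot]
    exact h
  exact LinearMap.ker_eq_bot.mp hker

/-- Explicit form of the projection update (with `W = I`) when the sketch is
`S = [S' s]`, `Y = Aᵀ S = [Y' y]` has full column rank, and the previous sketch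
columns are orthogonal to the residual (`S'ᵀ r = 0`): with `t̂ = (Y'ᵀY')⁻¹ Y'ᵀ y`
and `δ = yᵀy − yᵀ Y' t̂` one has `δ > 0` and
`Aᵀ S (Sᵀ A Aᵀ S)⁻¹ Sᵀ r = ((sᵀ r)/δ) (y − Y' t̂)`. -/
theorem stmt7 (m n k : ℕ)
    (A : Matrix (Fin m) (Fin n) ℝ)
    (S' : Matrix (Fin m) (Fin k) ℝ) (s : Fin m → ℝ)
    (S : Matrix (Fin m) (Fin k ⊕ Unit) ℝ)
    (hS : S = Matrix.fromCols S' (Matrix.of fun i (_ : Unit) => s i))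
    (Y' : Matrix (Fin n) (Fin k) ℝ) (hY' : Y' = Aᵀ * S')
    (y : Fin n → ℝ) (hy : y = Aᵀ.mulVec s)
    (hfull : LinearIndependent ℝ (fun (j : Fin k ⊕ Unit) i => (Aᵀ * S) i j))
    (r : Fin m → ℝ) (hr : S'ᵀ.mulVec r = 0)
    (t : Fin k → ℝ) (ht : t = (Y'ᵀ * Y')⁻¹.mulVec (Y'ᵀ.mulVec y))
    (δ : ℝ) (hδ : δ = y ⬝ᵥ y - y ⬝ᵥ Y'.mulVec t) :
    0 < δ ∧
      (Aᵀ * S).mulVec ((Sᵀ * A * Aᵀ * S)⁻¹.mulVec (Sᵀ.mulVec r)) =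
        ((s ⬝ᵥ r) / δ) • (y - Y'.mulVec t) := by
  classical
  set ycol : Matrix (Fin n) Unit ℝ := Matrix.of fun i (_ : Unit) => y i with hycol
  have hYeq : Aᵀ * S = Matrix.fromCols Y' ycol := by
    rw [hS, hY']
    ext i (j | j)
    · simp [Matrix.mul_apply]
    · simp [hycol, hy, Matrix.mul_apply, Matrix.mulVec, dotProduct]
  have hinj : Function.Injective (Aᵀ * S).mulVec := by
    rw [Matrix.mulVec_injective_iff]
    exact hfull
  have hY'inj : Function.Injective Y'.mulVec := by
    rw [Matrix.mulVec_injective_iff]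
    have he : (fun (j : Fin k) i => Y' i j) = (fun (j : Fin k ⊕ Unit) i => (Aᵀ * S) i j) ∘ Sum.inl := by
      funext j i
      rw [hYeq]
      simp
    show LinearIndependent ℝ (fun (j : Fin k) i => Y' i j)
    rw [he]
    exact hfull.comp Sum.inl Sum.inl_injective
  have hG'unit : IsUnit (Y'ᵀ * Y') := gram_isUnit_of_inj Y' hY'inj
  -- the normal equation satisfied by t
  have hnormal : (Y'ᵀ * Y') *ᵥ t = Y'ᵀ *ᵥ y := by
    rw [ht, Matrix.mulVec_mulVec, Matrix.mul_nonsing_inv _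
      ((Matrix.isUnit_iff_isUnit_det _).mp hG'unit), Matrix.one_mulVec]
  set u : Fin n → ℝ := Y'.mulVec t with hu
  set w : Fin n → ℝ := y - u with hw
  have huu : u ⬝ᵥ u = y ⬝ᵥ u := by
    calc u ⬝ᵥ u = u ⬝ᵥ (Y' *ᵥ t) := rfl
      _ = (Y'ᵀ *ᵥ u) ⬝ᵥ t := by rw [dotProduct_mulVec, Matrix.mulVec_transpose]
      _ = ((Y'ᵀ * Y') *ᵥ t) ⬝ᵥ t := by rw [hu, Matrix.mulVec_mulVec]
      _ = (Y'ᵀ *ᵥ y) ⬝ᵥ t := by rw [hnormal]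
      _ = (y ᵥ* Y') ⬝ᵥ t := by rw [Matrix.mulVec_transpose]
      _ = y ⬝ᵥ (Y' *ᵥ t) := (dotProduct_mulVec _ _ _).symm
      _ = y ⬝ᵥ u := rfl
  have hδw : δ = w ⬝ᵥ w := by
    have hc1 : u ⬝ᵥ y = y ⬝ᵥ u := dotProduct_comm u y
    rw [hδ, hw]
    simp only [sub_dotProduct, dotProduct_sub]
    linarith [huu, hc1]
  have hδnonneg : 0 ≤ δ := by
    rw [hδw]
    exact Finset.sum_nonneg fun i _ => mul_self_nonneg _
  have hδpos : 0 < δ := by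
    rcases lt_or_eq_of_le hδnonneg with h | h
    · exact h
    · exfalso
      have hw0 : w = 0 := dotProduct_self_eq_zero.mp (by rw [← hδw, ← h])
      have hyu : y = u := by rwa [hw, sub_eq_zero] at hw0
      set v0 : Fin k ⊕ Unit → ℝ := Sum.elim t (fun _ => (-1 : ℝ)) with hv0
      have hmv : (Aᵀ * S) *ᵥ v0 = 0 := by
        rw [hYeq, hv0, Matrix.fromCols_mulVec_sumElim]
        have : ycol *ᵥ (fun _ : Unit => (-1 : ℝ)) = -y := by
          ext i
          simp [hycol, Matrix.mulVec, dotProduct]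
        rw [this, ← hu, ← hyu]
        simp
      have : v0 = 0 := hinj (by rw [hmv, Matrix.mulVec_zero])
      have := congrFun this (Sum.inr ())
      simp [hv0] at this
  have hδne : δ ≠ 0 := ne_of_gt hδpos
  set c : ℝ := s ⬝ᵥ r with hc
  set α : ℝ := c / δ with hα
  set v : Fin k ⊕ Unit → ℝ := Sum.elim (-α • t) (fun _ => α) with hv
  have hYv : (Aᵀ * S) *ᵥ v = α • w := by
    rw [hYeq, hv, Matrix.fromCols_mulVec_sumElim]
    have h1 : Y' *ᵥ (-α • t) = -α • u := by rw [Matrix.mulVec_smul, hu]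
    have h2 : ycol *ᵥ (fun _ : Unit => α) = α • y := by
      ext i
      simp [hycol, Matrix.mulVec, dotProduct, mul_comm]
    rw [h1, h2, hw, smul_sub, neg_smul]
    abel
  have hSr : Sᵀ *ᵥ r = Sum.elim (0 : Fin k → ℝ) (fun _ => c) := by
    rw [hS, Matrix.transpose_fromCols, Matrix.fromRows_mulVec, hr]
    have hcol : (Matrix.of fun i (_ : Unit) => s i)ᵀ *ᵥ r = fun _ : Unit => c := by
      ext _
      simp [hc, Matrix.mulVec, dotProduct]
    rw [hcol]
  have hGeq : Sᵀ * A * Aᵀ * S = (Aᵀ * S)ᵀ * (Aᵀ * S) := by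
    rw [Matrix.transpose_mul, Matrix.transpose_transpose, Matrix.mul_assoc (Sᵀ * A)]
  have hGunit : IsUnit ((Aᵀ * S)ᵀ * (Aᵀ * S)) := gram_isUnit_of_inj _ hinj
  have hGv : ((Aᵀ * S)ᵀ * (Aᵀ * S)) *ᵥ v = Sᵀ *ᵥ r := by
    rw [← Matrix.mulVec_mulVec, hYv, Matrix.mulVec_smul, hSr]
    have hT : (Aᵀ * S)ᵀ = Matrix.fromRows Y'ᵀ ycolᵀ := by
      rw [hYeq, Matrix.transpose_fromCols]
    rw [hT, Matrix.fromRows_mulVec]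
    have hw1 : Y'ᵀ *ᵥ w = 0 := by
      rw [hw, Matrix.mulVec_sub, hu, Matrix.mulVec_mulVec, hnormal, sub_self]
    have hw2 : ycolᵀ *ᵥ w = fun _ : Unit => δ := by
      ext _
      have : (ycolᵀ *ᵥ w) () = y ⬝ᵥ w := by
        simp [hycol, Matrix.mulVec, dotProduct]
      rw [this, hw, dotProduct_sub, ← hδ]
    rw [hw1, hw2]
    ext (j | j)
    · simp
    · simp [hα, div_mul_cancel₀ c hδne]
  refine ⟨hδpos, ?_⟩
  have hsolve : (Sᵀ * A * Aᵀ * S)⁻¹ *ᵥ (Sᵀ *ᵥ r) = v := by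
    rw [hGeq, ← hGv, Matrix.mulVec_mulVec, Matrix.nonsing_inv_mul _
      ((Matrix.isUnit_iff_isUnit_det _).mp hGunit), Matrix.one_mulVec]
  rw [hsolve, hYv, hα, hc, hw, hu]
end

section
/- Let Y ∈ ℝ^{n×k} have full column rank k and admit the QR factorization Y = Q T with Q ∈ ℝ^{n×k} satisfying Qᵀ Q = I_k and T ∈ ℝ^{k×k} upper triangular. Then the last diagonal entry T_{kk} is nonzero, and for every ρ ∈ ℝ, Y (Yᵀ Y)⁻¹ (ρ e_k) = (ρ / T_{kk}) Q e_k, where e_k ∈ ℝ^k is the k-th standard basis vector. Consequently, if Y = Aᵀ S for a sketch S ∈ ℝ^{m×k} and r ∈ ℝ^m satisfies Sᵀ r = ρ e_k, then the projection update Aᵀ S (Sᵀ A Aᵀ S)⁻¹ Sᵀ r equals (ρ / T_{kk}) times the last column of Q. -/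
open Matrix

/-- QR form of the projection update: if `Y = Q T` with `Qᵀ Q = I` and `T` upper
triangular and `Y` has full column rank, then `T` has a nonzero last diagonal
entry and `Y (YᵀY)⁻¹ (ρ e_k) = (ρ / T_{kk}) Q e_k`; consequently, if `Y = Aᵀ S`
and `Sᵀ r = ρ e_k`, the projection update equals `(ρ / T_{kk})` times the last
column of `Q`. -/
theorem stmt8 (n k m : ℕ) (hk : 0 < k)
    (Y : Matrix (Fin n) (Fin k) ℝ)
    (hY : LinearIndependent ℝ (fun j i => Y i j))
    (Q : Matrix (Fin n) (Fin k) ℝ) (T : Matrix (Fin k) (Fin k) ℝ)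
    (hQR : Y = Q * T) (hQ : Qᵀ * Q = 1)
    (hT : ∀ i j : Fin k, (j : ℕ) < (i : ℕ) → T i j = 0)
    (last : Fin k) (hlast : (last : ℕ) = k - 1)
    (A : Matrix (Fin m) (Fin n) ℝ) (S : Matrix (Fin m) (Fin k) ℝ)
    (r : Fin m → ℝ) (ρ : ℝ) :
    T last last ≠ 0 ∧
    (∀ ρ' : ℝ,
      Y.mulVec ((Yᵀ * Y)⁻¹.mulVec (ρ' • (Pi.single last (1 : ℝ) : Fin k → ℝ))) =
        (ρ' / T last last) • Q.mulVec ((Pi.single last (1 : ℝ) : Fin k → ℝ))) ∧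
    (Y = Aᵀ * S → Sᵀ.mulVec r = ρ • (Pi.single last (1 : ℝ) : Fin k → ℝ) →
      (Aᵀ * S).mulVec ((Sᵀ * A * Aᵀ * S)⁻¹.mulVec (Sᵀ.mulVec r)) =
        (ρ / T last last) • (fun i => Q i last)) := by
  -- T has nonzero determinant
  have hdet : T.det ≠ 0 := by
    intro h
    obtain ⟨v, hv, hv0⟩ := (Matrix.exists_mulVec_eq_zero_iff).2 h
    have hYv : Y.mulVec v = 0 := by
      rw [hQR, ← Matrix.mulVec_mulVec, hv0, Matrix.mulVec_zero]
    have hsum : ∑ j, v j • (fun i => Y i j) = (0 : Fin n → ℝ) := by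
      ext i
      have := congrFun hYv i
      simpa [Matrix.mulVec, dotProduct, mul_comm, Finset.sum_apply] using this
    exact hv (funext (Fintype.linearIndependent_iff.1 hY v hsum))
  have hbt : T.BlockTriangular id := fun i j hij => hT i j hij
  have hdetprod : T.det = ∏ i, T i i := Matrix.det_of_upperTriangular hbt
  have hTkk : T last last ≠ 0 := by
    intro h
    exact hdet (hdetprod.trans (Finset.prod_eq_zero (Finset.mem_univ last) h))
  -- j ≠ last → T last j = 0
  have hlastmax : ∀ j : Fin k, j ≠ last → T last j = 0 := by
    intro j hj
    apply hT
    have hjk : (j : ℕ) < k := j.isLt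
    have : (j : ℕ) ≠ (last : ℕ) := fun h => hj (Fin.ext h)
    omega
  have hTdet : IsUnit T.det := isUnit_iff_ne_zero.2 hdet
  have hTTdet : IsUnit (Tᵀ).det := by rwa [Matrix.det_transpose]
  -- the last column of (Tᵀ)⁻¹
  have hcol : (Tᵀ)⁻¹.mulVec (Pi.single last (1 : ℝ)) =
      (1 / T last last) • (Pi.single last (1 : ℝ) : Fin k → ℝ) := by
    have hNT : (Tᵀ)⁻¹ * Tᵀ = 1 := Matrix.nonsing_inv_mul _ hTTdet
    ext i
    have h1 : ((Tᵀ)⁻¹ * Tᵀ) i last = (Tᵀ)⁻¹ i last * T last last := by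
      rw [Matrix.mul_apply]
      rw [Finset.sum_eq_single last]
      · rfl
      · intro j _ hj
        rw [Matrix.transpose_apply, hlastmax j hj, mul_zero]
      · intro h; exact absurd (Finset.mem_univ last) h
    have h2 : (Tᵀ)⁻¹ i last * T last last = (1 : Matrix (Fin k) (Fin k) ℝ) i last := by
      rw [← h1, hNT]
    have h3 : (Tᵀ)⁻¹ i last = (if i = last then (1:ℝ) else 0) / T last last := by
      rw [eq_div_iff hTkk, h2, Matrix.one_apply]
    simp only [Matrix.mulVec_single_one, Matrix.col_apply, Pi.smul_apply, smul_eq_mul]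
    rw [h3, Pi.single_apply]
    by_cases h : i = last <;> simp [h, div_eq_mul_inv, mul_comm]
  have key : ∀ ρ' : ℝ,
      Y.mulVec ((Yᵀ * Y)⁻¹.mulVec (ρ' • (Pi.single last (1 : ℝ) : Fin k → ℝ))) =
        (ρ' / T last last) • Q.mulVec ((Pi.single last (1 : ℝ) : Fin k → ℝ)) := by
    intro ρ'
    have hYY : Yᵀ * Y = Tᵀ * T := by
      rw [hQR, Matrix.transpose_mul, Matrix.mul_assoc, ← Matrix.mul_assoc Qᵀ, hQ, Matrix.one_mul]
    have hinv : (Yᵀ * Y)⁻¹ = T⁻¹ * (Tᵀ)⁻¹ := by rw [hYY, Matrix.mul_inv_rev]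
    have hprod : Y * (Yᵀ * Y)⁻¹ = Q * (Tᵀ)⁻¹ := by
      rw [hinv, hQR, Matrix.mul_assoc, ← Matrix.mul_assoc T, Matrix.mul_nonsing_inv _ hTdet,
        Matrix.one_mul]
    calc Y.mulVec ((Yᵀ * Y)⁻¹.mulVec (ρ' • (Pi.single last (1 : ℝ) : Fin k → ℝ)))
        = (Y * (Yᵀ * Y)⁻¹).mulVec (ρ' • (Pi.single last (1 : ℝ) : Fin k → ℝ)) := by
          rw [← Matrix.mulVec_mulVec]
      _ = (Q * (Tᵀ)⁻¹).mulVec (ρ' • (Pi.single last (1 : ℝ) : Fin k → ℝ)) := by rw [hprod]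
      _ = ρ' • Q.mulVec ((Tᵀ)⁻¹.mulVec (Pi.single last (1 : ℝ))) := by
          rw [Matrix.mulVec_smul, ← Matrix.mulVec_mulVec]
      _ = ρ' • Q.mulVec ((1 / T last last) • (Pi.single last (1 : ℝ) : Fin k → ℝ)) := by
          rw [hcol]
      _ = (ρ' / T last last) • Q.mulVec ((Pi.single last (1 : ℝ))) := by
          rw [Matrix.mulVec_smul, smul_smul]
          congr 1
          field_simp
  refine ⟨hTkk, key, ?_⟩
  intro hYS hSr
  have hSS : Sᵀ * A * Aᵀ * S = Yᵀ * Y := by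
    rw [hYS, Matrix.transpose_mul, Matrix.transpose_transpose]
    rw [Matrix.mul_assoc]
  rw [← hYS, hSS, hSr, key ρ]
  congr 1
  rw [Matrix.mulVec_single_one]
  rfl
end

section
/- Let A ∈ ℝ^{m×n} and k ≥ 1. Let U ∈ ℝ^{m×k} and V ∈ ℝ^{n×k} have orthonormal columns (Uᵀ U = I_k, Vᵀ V = I_k), and let L ∈ ℝ^{k×k} be lower bidiagonal (L_{ij} = 0 unless i = j or i = j + 1) with all diagonal entries α_j = L_{jj} nonzero, such that Aᵀ U = V Lᵀ. Let ζ_{k−1}, β_k ∈ ℝ, define the Craig residual r = −ζ_{k−1} β_k U e_k (a multiple of the last column of U) and ζ_k = −(β_k / α_k) ζ_{k−1}. Then the k×k matrix Uᵀ A Aᵀ U is invertible and the projection update with sketch U satisfies Aᵀ U (Uᵀ A Aᵀ U)⁻¹ Uᵀ r = ζ_k V e_k, i.e., it equals the Craig update ζ_k v_k, where v_k is the last column of V. -/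
open Matrix

/-- Equivalence with Craig's method: with `U, V` orthonormal, `L` lower
bidiagonal with nonzero diagonal, `Aᵀ U = V Lᵀ`, and the Craig residual
`r = −ζ_{k−1} β_k u_k`, the Gram matrix `Uᵀ A Aᵀ U` is invertible and the
projection update with sketch `U` equals the Craig update `ζ_k v_k`, where
`ζ_k = −(β_k/α_k) ζ_{k−1}`. -/
theorem stmt15 (m n k : ℕ) (hk : 0 < k)
    (A : Matrix (Fin m) (Fin n) ℝ)
    (U : Matrix (Fin m) (Fin k) ℝ) (V : Matrix (Fin n) (Fin k) ℝ)
    (hU : Uᵀ * U = 1) (hV : Vᵀ * V = 1)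
    (L : Matrix (Fin k) (Fin k) ℝ)
    (hbidiag : ∀ i j : Fin k, (i : ℕ) ≠ (j : ℕ) → (i : ℕ) ≠ (j : ℕ) + 1 → L i j = 0)
    (hdiag : ∀ j : Fin k, L j j ≠ 0)
    (hAU : Aᵀ * U = V * Lᵀ)
    (ζ' β : ℝ)
    (last : Fin k) (hlast : (last : ℕ) = k - 1)
    (r : Fin m → ℝ) (hr : r = (-(ζ' * β)) • (fun i => U i last))
    (ζ : ℝ) (hζ : ζ = -(β / L last last) * ζ') :
    IsUnit (Uᵀ * A * Aᵀ * U) ∧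
      (Aᵀ * U).mulVec ((Uᵀ * A * Aᵀ * U)⁻¹.mulVec (Uᵀ.mulVec r)) =
        ζ • (fun i => V i last) := by
  set α := L last last with hαdef
  have hα : α ≠ 0 := hdiag last
  have hLT : (Lᵀ).BlockTriangular id := by
    intro i j hij
    simp only [id] at hij
    exact hbidiag j i (by omega) (by omega)
  have hdetLT : (Lᵀ).det ≠ 0 := by
    rw [Matrix.det_of_upperTriangular hLT]
    exact Finset.prod_ne_zero_iff.mpr fun i _ => hdiag i
  have hdetL : L.det ≠ 0 := by rwa [← Matrix.det_transpose]
  have hLunit : IsUnit L := (Matrix.isUnit_iff_isUnit_det L).mpr (isUnit_iff_ne_zero.mpr hdetL)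
  have hLTunit : IsUnit Lᵀ := (Matrix.isUnit_iff_isUnit_det _).mpr (isUnit_iff_ne_zero.mpr hdetLT)
  have hUA : Uᵀ * A = L * Vᵀ := by
    have h := congrArg Matrix.transpose hAU
    simpa [Matrix.transpose_mul] using h
  have hG : Uᵀ * A * Aᵀ * U = L * Lᵀ := by
    calc Uᵀ * A * Aᵀ * U = (Uᵀ * A) * (Aᵀ * U) := by
          rw [Matrix.mul_assoc]
      _ = (L * Vᵀ) * (V * Lᵀ) := by rw [hUA, hAU]
      _ = L * (Vᵀ * V) * Lᵀ := by
          rw [Matrix.mul_assoc, Matrix.mul_assoc, Matrix.mul_assoc]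
      _ = L * Lᵀ := by rw [hV, Matrix.mul_one]
  have hGunit : IsUnit (Uᵀ * A * Aᵀ * U) := by
    rw [hG]; exact hLunit.mul hLTunit
  refine ⟨hGunit, ?_⟩
  have hdetLT' : IsUnit (Lᵀ).det := isUnit_iff_ne_zero.mpr hdetLT
  have hdetL' : IsUnit L.det := isUnit_iff_ne_zero.mpr hdetL
  -- key algebraic identity: Lᵀ * (L * Lᵀ)⁻¹ = L⁻¹
  have hinv : Lᵀ * (Uᵀ * A * Aᵀ * U)⁻¹ = L⁻¹ := by
    rw [hG, Matrix.mul_inv_rev, ← Matrix.mul_assoc,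
      Matrix.mul_nonsing_inv _ hdetLT', Matrix.one_mul]
  have hcol : (fun i => U i last) = U.mulVec (Pi.single last 1) := by
    funext i
    simp [Matrix.mulVec_single]
  have hUr : Uᵀ.mulVec r = Pi.single last (-(ζ' * β)) := by
    rw [hr, hcol, Matrix.mulVec_smul, Matrix.mulVec_mulVec, hU, Matrix.one_mulVec]
    funext i
    rcases eq_or_ne i last with h | h
    · subst h; simp
    · simp [Pi.single_eq_of_ne h]
  have hLe : ∀ c : ℝ, L.mulVec (Pi.single last (c / α)) = Pi.single last c := by
    intro c
    funext i
    rw [Matrix.mulVec_single]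
    simp only [Pi.smul_apply, Matrix.col_apply, MulOpposite.smul_eq_mul_unop, MulOpposite.unop_op]
    rcases eq_or_ne i last with h | h
    · subst h
      simp [Pi.single_eq_same, mul_div_cancel₀ _ hα, mul_comm, mul_div_assoc]
      rw [← hαdef]; field_simp
    · have hi : (i : ℕ) ≤ k - 1 := by omega
      have h1 : (i : ℕ) ≠ (last : ℕ) := fun hc => h (Fin.ext hc)
      have h2 : (i : ℕ) ≠ (last : ℕ) + 1 := by omega
      rw [hbidiag i last h1 h2, Pi.single_eq_of_ne h]
      ring
  have hLinv : ∀ c : ℝ, L⁻¹.mulVec (Pi.single last c) = Pi.single last (c / α) := by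
    intro c
    conv_lhs => rw [← hLe c]
    rw [Matrix.mulVec_mulVec, Matrix.nonsing_inv_mul _ hdetL', Matrix.one_mulVec]
  calc (Aᵀ * U).mulVec ((Uᵀ * A * Aᵀ * U)⁻¹.mulVec (Uᵀ.mulVec r))
      = V.mulVec (L⁻¹.mulVec (Pi.single last (-(ζ' * β)))) := by
        rw [hAU, Matrix.mulVec_mulVec, Matrix.mul_assoc, hinv,
          ← Matrix.mulVec_mulVec, hUr]
    _ = V.mulVec (Pi.single last (-(ζ' * β) / α)) := by rw [hLinv]
    _ = ζ • (fun i => V i last) := by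
        have hc : -(ζ' * β) / α = ζ := by
          rw [hζ, neg_mul, div_mul_eq_mul_div, neg_div, neg_inj]; ring
        funext i
        rw [Matrix.mulVec_single]
        dsimp only [Pi.smul_apply, smul_eq_mul, Matrix.col_apply, MulOpposite.smul_eq_mul_unop, MulOpposite.unop_op]
        rw [hc]; ring
end

section
/- Let A ∈ ℝ^{m×n} and let S ∈ ℝ^{m×k} have the same column space as A (range(S) = range(A)). Then for all p₁, p₂ ∈ ℝ^n, Sᵀ A p₁ = Sᵀ A p₂ implies A p₁ = A p₂ (equivalently, Sᵀ A and A have the same null space). Consequently, for any matrix B with Bᵀ B positive definite, any x ∈ ℝ^n and b ∈ ℝ^m with residual r = b − A x, the quantity rᵀ A p is constant over the feasible set F = { p ∈ ℝ^n : Sᵀ A (x + p) = Sᵀ b }, and hence p* ∈ F minimizes ½‖B p‖₂² − rᵀ A p over F if and only if p* minimizes ½‖B p‖₂² over F. -/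
/-!
If `range A ⊆ range S`, then `Sᵀ A p = 0` puts `A p` in the range of `S` and orthogonal to it,
so `A p = 0`. Hence all feasible `p` share the same `A p`, the linear term `rᵀ A p` is constant
on the feasible set, and subtracting a constant does not change the minimizers.
-/

open Matrix

namespace Matrix

variable {R : Type*} [CommRing R] [LinearOrder R] [IsStrictOrderedRing R]
  {ι κ ν : Type*} [Fintype ι] [Fintype κ] [Fintype ν]

theorem eq_zero_of_mem_range_of_transpose_mulVec_eq_zero {S : Matrix ι κ R} {v : ι → R}
    (hv : v ∈ LinearMap.range S.mulVecLin) (hS : Sᵀ *ᵥ v = 0) : v = 0 := by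
  obtain ⟨c, rfl⟩ := hv
  rw [mulVecLin_apply] at hS ⊢
  apply dotProduct_self_eq_zero.mp
  rw [dotProduct_mulVec, ← mulVec_transpose, hS, zero_dotProduct]

theorem mulVec_eq_of_transpose_mul_mulVec_eq {A : Matrix ι ν R} {S : Matrix ι κ R}
    (hrange : LinearMap.range A.mulVecLin ≤ LinearMap.range S.mulVecLin) {p₁ p₂ : ν → R}
    (h : (Sᵀ * A) *ᵥ p₁ = (Sᵀ * A) *ᵥ p₂) : A *ᵥ p₁ = A *ᵥ p₂ := by
  rw [← sub_eq_zero, ← mulVec_sub]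
  apply eq_zero_of_mem_range_of_transpose_mulVec_eq_zero (hrange ⟨p₁ - p₂, rfl⟩)
  rw [mulVecLin_apply, mulVec_mulVec, mulVec_sub, h, sub_self]

theorem mulVec_eq_of_sketched_eq {A : Matrix ι ν R} {S : Matrix ι κ R}
    (hrange : LinearMap.range A.mulVecLin ≤ LinearMap.range S.mulVecLin) {x p p' : ν → R}
    {b : ι → R} (hp : (Sᵀ * A) *ᵥ (x + p) = Sᵀ *ᵥ b) (hp' : (Sᵀ * A) *ᵥ (x + p') = Sᵀ *ᵥ b) :
    A *ᵥ p = A *ᵥ p' := by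
  have h := mulVec_eq_of_transpose_mul_mulVec_eq hrange (hp.trans hp'.symm)
  rwa [mulVec_add, mulVec_add, add_right_inj] at h

end Matrix

theorem forall_sub_le_sub_iff_of_const {α β : Type*} [AddCommGroup β] [PartialOrder β]
    [IsOrderedAddMonoid β] {P : α → Prop} {f g : α → β} {a : α}
    (hg : ∀ p, P p → g a = g p) :
    (∀ p, P p → f a - g a ≤ f p - g p) ↔ (∀ p, P p → f a ≤ f p) :=
  forall₂_congr fun p hp => by rw [hg p hp, sub_le_sub_iff_right]

theorem stmt16_general (m n k q : ℕ)
    (A : Matrix (Fin m) (Fin n) ℝ)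
    (S : Matrix (Fin m) (Fin k) ℝ)
    (hrange : LinearMap.range S.mulVecLin = LinearMap.range A.mulVecLin)
    (B : Matrix (Fin q) (Fin n) ℝ) :
    (∀ p₁ p₂ : Fin n → ℝ,
      (Sᵀ * A).mulVec p₁ = (Sᵀ * A).mulVec p₂ → A.mulVec p₁ = A.mulVec p₂) ∧
    (∀ x : Fin n → ℝ, ∀ b : Fin m → ℝ, ∀ r : Fin m → ℝ, r = b - A.mulVec x →
      (∀ p p' : Fin n → ℝ,
        (Sᵀ * A).mulVec (x + p) = Sᵀ.mulVec b →
        (Sᵀ * A).mulVec (x + p') = Sᵀ.mulVec b →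
        r ⬝ᵥ A.mulVec p = r ⬝ᵥ A.mulVec p') ∧
      (∀ pstar : Fin n → ℝ, (Sᵀ * A).mulVec (x + pstar) = Sᵀ.mulVec b →
        ((∀ p : Fin n → ℝ, (Sᵀ * A).mulVec (x + p) = Sᵀ.mulVec b →
            (1 / 2) * (B.mulVec pstar ⬝ᵥ B.mulVec pstar) - r ⬝ᵥ A.mulVec pstar ≤
              (1 / 2) * (B.mulVec p ⬝ᵥ B.mulVec p) - r ⬝ᵥ A.mulVec p) ↔
          (∀ p : Fin n → ℝ, (Sᵀ * A).mulVec (x + p) = Sᵀ.mulVec b →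
            (1 / 2) * (B.mulVec pstar ⬝ᵥ B.mulVec pstar) ≤
              (1 / 2) * (B.mulVec p ⬝ᵥ B.mulVec p))))) := by
  have hle : LinearMap.range A.mulVecLin ≤ LinearMap.range S.mulVecLin := hrange.ge
  refine ⟨fun _ _ => mulVec_eq_of_transpose_mul_mulVec_eq hle, fun x b r _ => ?_⟩
  have hconst : ∀ p p', (Sᵀ * A) *ᵥ (x + p) = Sᵀ *ᵥ b → (Sᵀ * A) *ᵥ (x + p') = Sᵀ *ᵥ b →
      r ⬝ᵥ A *ᵥ p = r ⬝ᵥ A *ᵥ p' := fun _ _ hp hp' => by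
    rw [mulVec_eq_of_sketched_eq hle hp hp']
  exact ⟨hconst, fun pstar hps =>
    forall_sub_le_sub_iff_of_const (f := fun p => 1 / 2 * (B *ᵥ p ⬝ᵥ B *ᵥ p))
      (g := fun p => r ⬝ᵥ A *ᵥ p) (hconst pstar · hps)⟩

/-- If the sketch `S` has the same column space as `A`, then `Sᵀ A` and `A` have
the same null space; consequently `rᵀ A p` is constant over the feasible set
`F = {p : Sᵀ A (x + p) = Sᵀ b}`, and minimizing `½‖Bp‖² − rᵀ A p` over `F` is
equivalent to minimizing `½‖Bp‖²` over `F`. -/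
theorem stmt16 (m n k q : ℕ)
    (A : Matrix (Fin m) (Fin n) ℝ)
    (S : Matrix (Fin m) (Fin k) ℝ)
    (hrange : LinearMap.range S.mulVecLin = LinearMap.range A.mulVecLin)
    (B : Matrix (Fin q) (Fin n) ℝ) (hB : (Bᵀ * B).PosDef) :
    (∀ p₁ p₂ : Fin n → ℝ,
      (Sᵀ * A).mulVec p₁ = (Sᵀ * A).mulVec p₂ → A.mulVec p₁ = A.mulVec p₂) ∧
    (∀ x : Fin n → ℝ, ∀ b : Fin m → ℝ, ∀ r : Fin m → ℝ, r = b - A.mulVec x →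
      (∀ p p' : Fin n → ℝ,
        (Sᵀ * A).mulVec (x + p) = Sᵀ.mulVec b →
        (Sᵀ * A).mulVec (x + p') = Sᵀ.mulVec b →
        r ⬝ᵥ A.mulVec p = r ⬝ᵥ A.mulVec p') ∧
      (∀ pstar : Fin n → ℝ, (Sᵀ * A).mulVec (x + pstar) = Sᵀ.mulVec b →
        ((∀ p : Fin n → ℝ, (Sᵀ * A).mulVec (x + p) = Sᵀ.mulVec b →
            (1 / 2) * (B.mulVec pstar ⬝ᵥ B.mulVec pstar) - r ⬝ᵥ A.mulVec pstar ≤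
              (1 / 2) * (B.mulVec p ⬝ᵥ B.mulVec p) - r ⬝ᵥ A.mulVec p) ↔
          (∀ p : Fin n → ℝ, (Sᵀ * A).mulVec (x + p) = Sᵀ.mulVec b →
            (1 / 2) * (B.mulVec pstar ⬝ᵥ B.mulVec pstar) ≤
              (1 / 2) * (B.mulVec p ⬝ᵥ B.mulVec p))))) :=
  stmt16_general m n k q A S hrange B
end
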